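/- The entanglement-assisted quantum capacity over the quantum trajectory satisfies Q_{E,Q} = C_{E,Q}/2 ≥ C_{E,C}/2 = Q_{E,C}; i.e., halving preserves the capacity ordering between quantum and classical trajectories. -/

import Mathlib

noncomputable def H (x : ℝ) : ℝ := -(x * Real.logb 2 x) - (1 - x) * Real.logb 2 (1 - x)

/-- General entanglement-assisted classical capacity over the classical trajectory
of two Pauli channels with error probabilities `(p0,p1,p2,p3)` and `(q0,q1,q2,q3)`. -/
noncomputable def CEC (p0 p1 p2 p3 q0 q1 q2 q3 : ℝ) : ℝ :=
  2 + (p0*q0 + p1*q1 + p2*q2 + p3*q3) * Real.logb 2 (p0*q0 + p1*q1 + p2*q2 + p3*q3)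
    + (p0*q1 + p1*q0 + p2*q3 + p3*q2) * Real.logb 2 (p0*q1 + p1*q0 + p2*q3 + p3*q2)
    + (p0*q2 + p2*q0 + p3*q1 + p1*q3) * Real.logb 2 (p0*q2 + p2*q0 + p3*q1 + p1*q3)
    + (p0*q3 + p3*q0 + p1*q2 + p2*q1) * Real.logb 2 (p0*q3 + p3*q0 + p1*q2 + p2*q1)

/-- General entanglement-assisted classical capacity over the quantum trajectory
(quantum switch) of two Pauli channels. -/
noncomputable def CEQ (p0 p1 p2 p3 q0 q1 q2 q3 : ℝ) : ℝ :=
  2 + H ((p0*q0 + p1*q1 + p2*q2 + p3*q3) + (p0*q1 + p1*q0) + (p0*q2 + p2*q0) + (p0*q3 + p3*q0))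
    + (p0*q0 + p1*q1 + p2*q2 + p3*q3) * Real.logb 2 (p0*q0 + p1*q1 + p2*q2 + p3*q3)
    + (p0*q1 + p1*q0) * Real.logb 2 (p0*q1 + p1*q0)
    + (p0*q2 + p2*q0) * Real.logb 2 (p0*q2 + p2*q0)
    + (p0*q3 + p3*q0) * Real.logb 2 (p0*q3 + p3*q0)
    + (p2*q3 + p3*q2) * Real.logb 2 (p2*q3 + p3*q2)
    + (p3*q1 + p1*q3) * Real.logb 2 (p3*q1 + p1*q3)
    + (p1*q2 + p2*q1) * Real.logb 2 (p1*q2 + p2*q1)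

lemma pointwise_log (x y s t : ℝ) (hx : 0 ≤ x) (hxs : x ≤ s) (hy : 0 ≤ y) (hyt : y ≤ t)
    (hst : s + t ≤ 1) :
    x * Real.log s + y * Real.log t + (x + y) * Real.log (x + y)
      ≤ x * Real.log x + y * Real.log y := by
  rcases eq_or_lt_of_le hx with hx0 | hx0
  · rcases eq_or_lt_of_le hy with hy0 | hy0
    · simp [← hx0, ← hy0]
    · have ht : t ≤ 1 := by linarith
      have : Real.log t ≤ 0 := Real.log_nonpos (by linarith) ht
      have := mul_nonpos_of_nonneg_of_nonpos hy this
      simp only [← hx0, zero_mul, zero_add]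
      linarith
  · rcases eq_or_lt_of_le hy with hy0 | hy0
    · have hs : s ≤ 1 := by linarith
      have : Real.log s ≤ 0 := Real.log_nonpos (by linarith) hs
      have := mul_nonpos_of_nonneg_of_nonpos hx this
      simp only [← hy0, zero_mul, add_zero]
      linarith
    · have hs : 0 < s := lt_of_lt_of_le hx0 hxs
      have ht : 0 < t := lt_of_lt_of_le hy0 hyt
      have hxy : 0 < x + y := by linarith
      have h1 : Real.log (s * (x + y) / x) ≤ s * (x + y) / x - 1 :=
        Real.log_le_sub_one_of_pos (by positivity)
      have h2 : Real.log (t * (x + y) / y) ≤ t * (x + y) / y - 1 :=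
        Real.log_le_sub_one_of_pos (by positivity)
      have e1 : Real.log (s * (x + y) / x) = Real.log s + Real.log (x + y) - Real.log x := by
        rw [Real.log_div (by positivity) (by positivity), Real.log_mul (by positivity) (by positivity)]
      have e2 : Real.log (t * (x + y) / y) = Real.log t + Real.log (x + y) - Real.log y := by
        rw [Real.log_div (by positivity) (by positivity), Real.log_mul (by positivity) (by positivity)]
      rw [e1] at h1; rw [e2] at h2
      have h1' := mul_le_mul_of_nonneg_left h1 hx
      have h2' := mul_le_mul_of_nonneg_left h2 hy
      have hd1 : x * (s * (x + y) / x - 1) = s * (x + y) - x := by field_simp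
      have hd2 : y * (t * (x + y) / y - 1) = t * (x + y) - y := by field_simp
      rw [hd1] at h1'; rw [hd2] at h2'
      nlinarith [mul_le_mul_of_nonneg_right hst (le_of_lt hxy)]

lemma pointwise (x y s t : ℝ) (hx : 0 ≤ x) (hxs : x ≤ s) (hy : 0 ≤ y) (hyt : y ≤ t)
    (hst : s + t ≤ 1) :
    x * Real.logb 2 s + y * Real.logb 2 t + (x + y) * Real.logb 2 (x + y)
      ≤ x * Real.logb 2 x + y * Real.logb 2 y := by
  have hl2 : (0:ℝ) < Real.log 2 := Real.log_pos one_lt_two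
  simp only [Real.logb, ← mul_div_assoc, ← add_div]
  exact div_le_div_of_nonneg_right (pointwise_log x y s t hx hxs hy hyt hst) hl2.le |>.trans_eq rfl

lemma key (a0 a1 b1 a2 b2 a3 b3 : ℝ)
    (h0 : 0 ≤ a0) (h1 : 0 ≤ a1) (h1' : 0 ≤ b1) (h2 : 0 ≤ a2) (h2' : 0 ≤ b2)
    (h3 : 0 ≤ a3) (h3' : 0 ≤ b3)
    (hsum : a0 + a1 + b1 + a2 + b2 + a3 + b3 = 1) :
    (a1 + b1) * Real.logb 2 (a1 + b1) + (a2 + b2) * Real.logb 2 (a2 + b2)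
      + (a3 + b3) * Real.logb 2 (a3 + b3)
    ≤ H (a0 + a1 + a2 + a3)
      + a1 * Real.logb 2 a1 + a2 * Real.logb 2 a2 + a3 * Real.logb 2 a3
      + b1 * Real.logb 2 b1 + b2 * Real.logb 2 b2 + b3 * Real.logb 2 b3 := by
  set α := a0 + a1 + a2 + a3 with hα
  set β := b1 + b2 + b3 with hβ
  have hβα : 1 - α = β := by linarith
  have hαβ : α + β ≤ 1 := by linarith
  have hα1 : α ≤ 1 := by linarith
  have hα0 : 0 ≤ α := by linarith
  have k1 := pointwise a1 b1 α β h1 (by linarith) h1' (by linarith) hαβ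
  have k2 := pointwise a2 b2 α β h2 (by linarith) h2' (by linarith) hαβ
  have k3 := pointwise a3 b3 α β h3 (by linarith) h3' (by linarith) hαβ
  have hHa : H α = -(α * Real.logb 2 α) - β * Real.logb 2 β := by
    rw [H, hβα]
  have hlogα : a0 * Real.logb 2 α ≤ 0 :=
    mul_nonpos_of_nonneg_of_nonpos h0 (Real.logb_nonpos one_lt_two hα0 hα1)
  have hs1 : α * Real.logb 2 α =
      a0 * Real.logb 2 α + a1 * Real.logb 2 α + a2 * Real.logb 2 α + a3 * Real.logb 2 α := by
    rw [hα]; ring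
  have hs2 : β * Real.logb 2 β =
      b1 * Real.logb 2 β + b2 * Real.logb 2 β + b3 * Real.logb 2 β := by
    rw [hβ]; ring
  linarith [k1, k2, k3]

theorem stmt_15 (p0 p1 p2 p3 q0 q1 q2 q3 : ℝ)
    (hp0 : 0 ≤ p0) (hp1 : 0 ≤ p1) (hp2 : 0 ≤ p2) (hp3 : 0 ≤ p3)
    (hq0 : 0 ≤ q0) (hq1 : 0 ≤ q1) (hq2 : 0 ≤ q2) (hq3 : 0 ≤ q3)
    (hps : p0 + p1 + p2 + p3 = 1) (hqs : q0 + q1 + q2 + q3 = 1) :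
    CEC p0 p1 p2 p3 q0 q1 q2 q3 / 2 ≤ CEQ p0 p1 p2 p3 q0 q1 q2 q3 / 2 := by

  have hnn : ∀ a b c d : ℝ, 0 ≤ a → 0 ≤ b → 0 ≤ c → 0 ≤ d → 0 ≤ a*b + c*d := by
    intro a b c d ha hb hc hd; positivity
  have hkey := key (p0*q0 + p1*q1 + p2*q2 + p3*q3) (p0*q1 + p1*q0) (p2*q3 + p3*q2)
      (p0*q2 + p2*q0) (p3*q1 + p1*q3) (p0*q3 + p3*q0) (p1*q2 + p2*q1)
      (by positivity) (by positivity) (by positivity) (by positivity) (by positivity)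
      (by positivity) (by positivity)
      (by nlinarith [hps, hqs, mul_self_nonneg (p0+p1+p2+p3-1)])
  have e1 : p0*q1 + p1*q0 + p2*q3 + p3*q2 = (p0*q1 + p1*q0) + (p2*q3 + p3*q2) := by ring
  have e2 : p0*q2 + p2*q0 + p3*q1 + p1*q3 = (p0*q2 + p2*q0) + (p3*q1 + p1*q3) := by ring
  have e3 : p0*q3 + p3*q0 + p1*q2 + p2*q1 = (p0*q3 + p3*q0) + (p1*q2 + p2*q1) := by ring
  rw [CEC, CEQ, e1, e2, e3]
  have hHeq : (p0*q0 + p1*q1 + p2*q2 + p3*q3) + (p0*q1 + p1*q0) + (p0*q2 + p2*q0)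
      + (p0*q3 + p3*q0)
      = (p0*q0 + p1*q1 + p2*q2 + p3*q3) + (p0*q1 + p1*q0) + (p0*q2 + p2*q0)
      + (p0*q3 + p3*q0) := rfl
  apply div_le_div_of_nonneg_right _ (by norm_num)
  linarith [hkey]
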